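/- The vector ζ1 + ζ3 + ζ4 + ζ6 lies in the W-orbit of ρ_c; that is, the infinitesimal character [1,0,1,1,0,1,0] is conjugate to ρ_c under the Weyl group of E7. -/

import Mathlib

/-!
Work in root coordinates, where everything is integral. Since `ζ = ω₇`, the compact positive
roots are the positive roots with vanishing `α₇`-coefficient. Cauchy–Schwarz against the
fundamental weights bounds the coefficients of a positive root by those of the highest root, so a
finite search gives `2ρ_c = 16α₁ + 22α₂ + 30α₃ + 42α₄ + 30α₅ + 16α₆`, whose Dynkin labels are
`[1,1,1,1,1,1,-8]`. Twelve simple reflections, each in a simple root on which the current weight is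
negative, carry `ρ_c` to the dominant weight with labels `[1,0,1,1,0,1,0]`; a vector in the span of
the roots is determined by its labels.
-/

open scoped BigOperators

namespace E7

noncomputable section

/-- The standard inner product on ℝ⁸. -/
def ip (x y : Fin 8 → ℝ) : ℝ := ∑ i, x i * y i

/-- The simple roots α₁,…,α₇ of E₇ (indexed by `Fin 7`). -/
def sroot : Fin 7 → Fin 8 → ℝ :=
  ![![1/2, -1/2, -1/2, -1/2, -1/2, -1/2, -1/2, 1/2],
    ![1, 1, 0, 0, 0, 0, 0, 0],
    ![-1, 1, 0, 0, 0, 0, 0, 0],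
    ![0, -1, 1, 0, 0, 0, 0, 0],
    ![0, 0, -1, 1, 0, 0, 0, 0],
    ![0, 0, 0, -1, 1, 0, 0, 0],
    ![0, 0, 0, 0, -1, 1, 0, 0]]

/-- The root lattice `Q`: integer linear combinations of the simple roots. -/
def latQ : Set (Fin 8 → ℝ) := {v | ∃ c : Fin 7 → ℤ, v = ∑ j, (c j : ℝ) • sroot j}

/-- The E₇ root system `Φ = {v ∈ Q : ⟨v,v⟩ = 2}`. -/
def Phi : Set (Fin 8 → ℝ) := {v | v ∈ latQ ∧ ip v v = 2}

/-- The vector ζ. -/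
def zeta : Fin 8 → ℝ := ![0, 0, 0, 0, 0, 1, -1/2, 1/2]

/-- The positive roots Δ⁺: roots that are nonnegative integer combinations
of the simple roots. -/
def PhiPos : Set (Fin 8 → ℝ) :=
  {v | v ∈ Phi ∧ ∃ c : Fin 7 → ℕ, v = ∑ j, (c j : ℝ) • sroot j}

/-- The compact positive roots Δ⁺(k) = {α ∈ Δ⁺ : ⟨α,ζ⟩ = 0}. -/
def PhiPosK : Set (Fin 8 → ℝ) := {v | v ∈ PhiPos ∧ ip v zeta = 0}

/-- The Weyl group `W` of E₇: the subgroup of linear automorphisms of ℝ⁸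
generated by the reflections `s_α : v ↦ v − ⟨v,α⟩α` for `α ∈ Φ`. -/
def W : Subgroup ((Fin 8 → ℝ) ≃ₗ[ℝ] (Fin 8 → ℝ)) :=
  Subgroup.closure {g | ∃ a ∈ Phi, ∀ v, g v = v - ip v a • a}

/-- The subgroup of `W` generated by the six compact simple reflections
`s_{γ₁},…,s_{γ₆}` (the Weyl group of E₆, i.e. of k). -/
def WK : Subgroup ((Fin 8 → ℝ) ≃ₗ[ℝ] (Fin 8 → ℝ)) :=
  Subgroup.closure
    {g | ∃ i : Fin 6, ∀ v, g v = v - ip v (sroot i.castSucc) • sroot i.castSucc}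

end

end E7

open Matrix

section DotProduct

variable {n ι : Type*} [Fintype n]

theorem sq_dotProduct_le_dotProduct_self_mul {R : Type*} [CommRing R] [LinearOrder R]
    [IsStrictOrderedRing R] (x y : n → R) : (x ⬝ᵥ y) ^ 2 ≤ (x ⬝ᵥ x) * (y ⬝ᵥ y) := by
  simpa only [dotProduct, sq] using Finset.sum_mul_sq_le_sq_mul_sq Finset.univ x y

theorem eq_of_mem_span_of_forall_dotProduct_eq {R : Type*} [Field R] [LinearOrder R]
    [IsStrictOrderedRing R] {v : ι → n → R} {x y : n → R}
    (hx : x ∈ Submodule.span R (Set.range v)) (hy : y ∈ Submodule.span R (Set.range v))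
    (h : ∀ i, x ⬝ᵥ v i = y ⬝ᵥ v i) : x = y := by
  have hspan : Submodule.span R (Set.range v) ≤ LinearMap.ker (dotProductBilin R R (x - y)) := by
    rw [Submodule.span_le]
    rintro _ ⟨i, rfl⟩
    simp [h i]
  have hself : (x - y) ⬝ᵥ (x - y) = 0 := hspan (sub_mem hx hy)
  exact sub_eq_zero.mp (dotProduct_self_eq_zero.mp hself)

end DotProduct

namespace E7

theorem ip_eq_dotProduct (x y : Fin 8 → ℝ) : ip x y = x ⬝ᵥ y := rfl

theorem ip_comm (x y : Fin 8 → ℝ) : ip x y = ip y x := dotProduct_comm x y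

noncomputable def rootComb : (Fin 7 → ℤ) →+ (Fin 8 → ℝ) where
  toFun c := ∑ j, (c j : ℝ) • sroot j
  map_zero' := by simp
  map_add' c d := by simp [add_smul, Finset.sum_add_distrib]

theorem rootComb_apply (c : Fin 7 → ℤ) : rootComb c = ∑ j, (c j : ℝ) • sroot j := rfl

theorem rootComb_single (i : Fin 7) : rootComb (Pi.single i 1) = sroot i := by
  simp [rootComb_apply, Pi.single_apply]

theorem rootComb_mem_latQ (c : Fin 7 → ℤ) : rootComb c ∈ latQ := ⟨c, rfl⟩

theorem rootComb_mem_span (c : Fin 7 → ℤ) : rootComb c ∈ Submodule.span ℝ (Set.range sroot) :=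
  rootComb_apply c ▸ Submodule.sum_mem _ fun j _ =>
    Submodule.smul_mem _ _ (Submodule.subset_span (Set.mem_range_self j))

theorem ip_sroot_sroot (i j : Fin 7) : ip (sroot i) (sroot j) = CartanMatrix.E₇ i j := by
  fin_cases i <;> fin_cases j <;> norm_num [ip, sroot, Fin.sum_univ_succ, CartanMatrix.E₇]

theorem ip_sroot_self (i : Fin 7) : ip (sroot i) (sroot i) = 2 := by
  rw [ip_sroot_sroot]
  fin_cases i <;> rfl

theorem ip_rootComb_left (c : Fin 7 → ℤ) (v : Fin 8 → ℝ) :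
    ip (rootComb c) v = ∑ j, (c j : ℝ) * ip (sroot j) v := by
  simp [ip_eq_dotProduct, rootComb_apply, sum_dotProduct, smul_dotProduct]

theorem ip_rootComb_sroot (c : Fin 7 → ℤ) (j : Fin 7) :
    ip (rootComb c) (sroot j) = (c ᵥ* CartanMatrix.E₇) j := by
  simp [ip_rootComb_left, ip_sroot_sroot, vecMul, dotProduct]

/-- The form `c ⬝ᵥ (c ᵥ* E₇)` of `e7Form_eq`, written out because the kernel evaluates it much
faster in `decide`. -/
def e7Form (c : Fin 7 → ℤ) : ℤ :=
  2 * ∑ i, c i ^ 2 - 2 * (c 0 * c 2 + c 1 * c 3 + c 2 * c 3 + c 3 * c 4 + c 4 * c 5 + c 5 * c 6)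

theorem e7Form_eq (c : Fin 7 → ℤ) : e7Form c = c ⬝ᵥ (c ᵥ* CartanMatrix.E₇) := by
  simp [e7Form, vecMul, dotProduct, Fin.sum_univ_succ, CartanMatrix.E₇]
  ring

theorem ip_rootComb_self (c : Fin 7 → ℤ) : ip (rootComb c) (rootComb c) = e7Form c := by
  rw [ip_rootComb_left]
  simp [ip_comm (sroot _) (rootComb c), ip_rootComb_sroot, e7Form_eq, dotProduct]

noncomputable def fundWeight : Fin 7 → Fin 8 → ℝ :=
  ![![0, 0, 0, 0, 0, 0, -1, 1],
    ![1/2, 1/2, 1/2, 1/2, 1/2, 1/2, -1, 1],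
    ![-1/2, 1/2, 1/2, 1/2, 1/2, 1/2, -3/2, 3/2],
    ![0, 0, 1, 1, 1, 1, -2, 2],
    ![0, 0, 0, 1, 1, 1, -3/2, 3/2],
    ![0, 0, 0, 0, 1, 1, -1, 1],
    zeta]

theorem fundWeight_six : fundWeight 6 = zeta := rfl

theorem ip_sroot_fundWeight (i j : Fin 7) :
    ip (sroot i) (fundWeight j) = if i = j then 1 else 0 := by
  fin_cases i <;> fin_cases j <;> norm_num [ip, sroot, fundWeight, zeta, Fin.sum_univ_succ]

theorem ip_rootComb_fundWeight (c : Fin 7 → ℤ) (j : Fin 7) :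
    ip (rootComb c) (fundWeight j) = c j := by
  simp [ip_rootComb_left, ip_sroot_fundWeight]

theorem rootComb_injective : Function.Injective rootComb := fun c d h => funext fun j => by
  exact_mod_cast (ip_rootComb_fundWeight c j).symm.trans (h ▸ ip_rootComb_fundWeight d j)

/-- The coefficients of the highest root of E₇, which are also `⌊√(2 ‖ωⱼ‖²)⌋`. -/
def coeffBound : Fin 7 → ℕ := ![2, 2, 3, 4, 3, 2, 1]

theorem two_mul_ip_fundWeight_self_lt (j : Fin 7) :
    2 * ip (fundWeight j) (fundWeight j) < ((coeffBound j : ℝ) + 1) ^ 2 := by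
  fin_cases j <;> norm_num [ip, fundWeight, zeta, coeffBound, Fin.sum_univ_succ]

theorem le_coeffBound_of_e7Form_eq_two {c : Fin 7 → ℤ} (hc : e7Form c = 2) (j : Fin 7) :
    c j ≤ coeffBound j := by
  have hcs := sq_dotProduct_le_dotProduct_self_mul (rootComb c) (fundWeight j)
  simp only [← ip_eq_dotProduct, ip_rootComb_fundWeight, ip_rootComb_self, hc] at hcs
  have hlt : |(c j : ℝ)| < coeffBound j + 1 :=
    abs_lt_of_sq_lt_sq (by push_cast at hcs; linarith [two_mul_ip_fundWeight_self_lt j])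
      (by positivity)
  have hlt' : c j < (coeffBound j : ℤ) + 1 := by exact_mod_cast (le_abs_self _).trans_lt hlt
  omega

def posRootCoeffs : Finset (Fin 7 → ℕ) :=
  (Fintype.piFinset fun j => Finset.range (coeffBound j + 1)).filter fun c => e7Form (c ·) = 2

theorem mem_PhiPos_iff {v : Fin 8 → ℝ} :
    v ∈ PhiPos ↔ ∃ c ∈ posRootCoeffs, rootComb (c ·) = v := by
  have hcomb (c : Fin 7 → ℕ) : rootComb (c ·) = ∑ j, (c j : ℝ) • sroot j := by
    simp [rootComb_apply]
  constructor
  · rintro ⟨⟨-, hnorm⟩, c, rfl⟩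
    have hform : e7Form (c ·) = 2 := by
      rw [← hcomb, ip_rootComb_self] at hnorm
      exact_mod_cast hnorm
    refine ⟨c, ?_, hcomb c⟩
    simp only [posRootCoeffs, Finset.mem_filter, Fintype.mem_piFinset, Finset.mem_range]
    exact ⟨fun j => by have := le_coeffBound_of_e7Form_eq_two hform j; omega, hform⟩
  · rintro ⟨c, hc, rfl⟩
    have hform : e7Form (c ·) = 2 := (Finset.mem_filter.mp hc).2
    refine ⟨⟨rootComb_mem_latQ _, ?_⟩, c, hcomb c⟩
    rw [ip_rootComb_self, hform]
    norm_num

def compactPosRootCoeffs : Finset (Fin 7 → ℕ) := posRootCoeffs.filter (· 6 = 0)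

theorem mem_PhiPosK_iff {v : Fin 8 → ℝ} :
    v ∈ PhiPosK ↔ ∃ c ∈ compactPosRootCoeffs, rootComb (c ·) = v := by
  have hzeta (c : Fin 7 → ℕ) : ip (rootComb (c ·)) zeta = c 6 := by
    rw [← fundWeight_six, ip_rootComb_fundWeight, Int.cast_natCast]
  simp only [PhiPosK, Set.mem_ofPred_eq, mem_PhiPos_iff, compactPosRootCoeffs, Finset.mem_filter]
  constructor
  · rintro ⟨⟨c, hc, rfl⟩, h6⟩
    exact ⟨c, ⟨hc, by exact_mod_cast (hzeta c).symm.trans h6⟩, rfl⟩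
  · rintro ⟨c, ⟨hc, h6⟩, rfl⟩
    exact ⟨⟨c, hc, rfl⟩, by rw [hzeta, h6, Nat.cast_zero]⟩

def rhoCoeffs : Fin 7 → ℤ := ![8, 11, 15, 21, 15, 8, 0]

theorem sum_compactPosRootCoeffs :
    ∑ c ∈ compactPosRootCoeffs, (fun j => (c j : ℤ)) = 2 • rhoCoeffs := by
  decide +kernel

theorem half_sum_eq_rootComb_rhoCoeffs {sK : Finset (Fin 8 → ℝ)}
    (hsK : (sK : Set (Fin 8 → ℝ)) = PhiPosK) :
    (1/2 : ℝ) • ∑ y ∈ sK, y = rootComb rhoCoeffs := by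
  have hsK' : sK = compactPosRootCoeffs.image fun c => rootComb (c ·) := by
    ext v
    rw [← Finset.mem_coe, hsK, mem_PhiPosK_iff, Finset.mem_image]
  have hinj : Set.InjOn (fun c : Fin 7 → ℕ => rootComb (c ·)) compactPosRootCoeffs :=
    fun c _ d _ h => funext fun j => by exact_mod_cast congrFun (rootComb_injective h) j
  rw [hsK', Finset.sum_image hinj, ← map_sum, sum_compactPosRootCoeffs, map_nsmul, two_nsmul,
    ← two_smul ℝ, smul_smul]
  norm_num

noncomputable def simpleReflection (i : Fin 7) : (Fin 8 → ℝ) ≃ₗ[ℝ] (Fin 8 → ℝ) :=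
  Module.reflection (x := sroot i) (f := dotProductBilin ℝ ℝ (sroot i))
    (show dotProductBilin ℝ ℝ (sroot i) (sroot i) = 2 from ip_sroot_self i)

theorem simpleReflection_apply (i : Fin 7) (v : Fin 8 → ℝ) :
    simpleReflection i v = v - ip v (sroot i) • sroot i := by
  rw [simpleReflection, Module.reflection_apply, dotProductBilin_apply_apply, ip_eq_dotProduct,
    dotProduct_comm]

theorem sroot_mem_Phi (i : Fin 7) : sroot i ∈ Phi :=
  ⟨rootComb_single i ▸ rootComb_mem_latQ _, ip_sroot_self i⟩

theorem simpleReflection_mem_W (i : Fin 7) : simpleReflection i ∈ W :=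
  Subgroup.subset_closure ⟨sroot i, sroot_mem_Phi i, simpleReflection_apply i⟩

def reflectCoeffs (i : Fin 7) (c : Fin 7 → ℤ) : Fin 7 → ℤ :=
  c - (c ᵥ* CartanMatrix.E₇) i • Pi.single i 1

theorem simpleReflection_rootComb (i : Fin 7) (c : Fin 7 → ℤ) :
    simpleReflection i (rootComb c) = rootComb (reflectCoeffs i c) := by
  rw [simpleReflection_apply, ip_rootComb_sroot, reflectCoeffs, map_sub, map_zsmul,
    rootComb_single, Int.cast_smul_eq_zsmul]

theorem list_prod_simpleReflection_rootComb (w : List (Fin 7)) (c : Fin 7 → ℤ) :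
    (w.map simpleReflection).prod (rootComb c) = rootComb (w.foldr reflectCoeffs c) := by
  induction w with
  | nil => rfl
  | cons i w ih => simp [LinearEquiv.mul_apply, ih, simpleReflection_rootComb]

theorem list_prod_simpleReflection_mem_W (w : List (Fin 7)) : (w.map simpleReflection).prod ∈ W :=
  list_prod_mem fun g hg => by
    obtain ⟨i, -, rfl⟩ := List.mem_map.mp hg
    exact simpleReflection_mem_W i

def weylWord : List (Fin 7) := [5, 3, 4, 2, 3, 0, 2, 1, 3, 4, 5, 6]

def lambdaCoeffs : Fin 7 → ℤ := ![11, 15, 21, 30, 23, 16, 8]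

theorem foldr_weylWord_rhoCoeffs : weylWord.foldr reflectCoeffs rhoCoeffs = lambdaCoeffs := by
  decide

theorem fundWeight_sum_eq_rootComb_lambdaCoeffs {fw : Fin 7 → Fin 8 → ℝ}
    (hfw_span : ∀ i, fw i ∈ Submodule.span ℝ (Set.range sroot))
    (hfw_pair : ∀ i j, ip (fw i) (sroot j) = if i = j then 1 else 0) :
    fw 0 + fw 2 + fw 3 + fw 5 = rootComb lambdaCoeffs := by
  have hlabels : lambdaCoeffs ᵥ* CartanMatrix.E₇ = ![1, 0, 1, 1, 0, 1, 0] := by decide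
  refine eq_of_mem_span_of_forall_dotProduct_eq
    (add_mem (add_mem (add_mem (hfw_span 0) (hfw_span 2)) (hfw_span 3)) (hfw_span 5))
    (rootComb_mem_span _) fun j => ?_
  simp only [add_dotProduct, ← ip_eq_dotProduct, hfw_pair, ip_rootComb_sroot, hlabels]
  fin_cases j <;> norm_num [Fin.ext_iff]

/-- ζ₁ + ζ₃ + ζ₄ + ζ₆ lies in the Weyl group orbit of ρ_c; i.e. the
infinitesimal character [1,0,1,1,0,1,0] is W-conjugate to ρ_c. -/
theorem e7_inf_char_conjugate_to_rho_c
    (fw : Fin 7 → Fin 8 → ℝ)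
    (hfw_span : ∀ i, fw i ∈ Submodule.span ℝ (Set.range sroot))
    (hfw_pair : ∀ i j, ip (fw i) (sroot j) = if i = j then 1 else 0)
    (sK : Finset (Fin 8 → ℝ)) (hsK : (sK : Set (Fin 8 → ℝ)) = PhiPosK) :
    ∃ g ∈ W, fw 0 + fw 2 + fw 3 + fw 5 = g ((1/2 : ℝ) • ∑ y ∈ sK, y) := by
  refine ⟨(weylWord.map simpleReflection).prod, list_prod_simpleReflection_mem_W weylWord, ?_⟩
  rw [fundWeight_sum_eq_rootComb_lambdaCoeffs hfw_span hfw_pair,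
    half_sum_eq_rootComb_rhoCoeffs hsK, list_prod_simpleReflection_rootComb,
    foldr_weylWord_rhoCoeffs]

end E7
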